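/- Let w be an A₂ weight and let 𝒢* = 𝒢*(Q₀) be the stopping family associated to a cube Q₀ ∈ 𝒬, the weight w, and any collection 𝒬 ⊂ 𝒟. Then there is an absolute constant C (one may take C = 16/3) such that for every R ∈ 𝒟: Σ_{Q∈𝒢*: Q⊂R} w(Q) ≤ C·[w]_{A₂}·w(R). -/

import Mathlib

open MeasureTheory Set
open scoped ENNReal NNReal Classical

noncomputable section

/-- The translation parameter space `Ω = ({0,1}^d)^ℤ` for random dyadic lattices. -/
abbrev TransParam (d : ℕ) := ℤ → Fin d → Bool

/-- A dyadic cube: scale `k` (side length `2^k`) and integer position `m`. -/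
structure DyadicCube (d : ℕ) where
  k : ℤ
  m : Fin d → ℤ

namespace DyadicCube

variable {d : ℕ}

/-- The translation vector `Σ_{j<k} ω_j 2^j` of the lattice `𝒟_ω` at generation `k`. -/
def shiftVec (ω : TransParam d) (k : ℤ) (i : Fin d) : ℝ :=
  ∑' j : {j : ℤ // j < k}, if ω j.1 i then (2:ℝ) ^ (j.1 : ℤ) else 0

/-- The point set of the cube `Q` in the translated dyadic lattice `𝒟_ω`. -/
def set (ω : TransParam d) (Q : DyadicCube d) : Set (Fin d → ℝ) :=
  {x | ∀ i, (Q.m i : ℝ) * 2 ^ Q.k + shiftVec ω Q.k i ≤ x i ∧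
            x i < ((Q.m i : ℝ) + 1) * 2 ^ Q.k + shiftVec ω Q.k i}

/-- Side length `ℓ(Q) = 2^k`. -/
def len (Q : DyadicCube d) : ℝ := 2 ^ Q.k

/-- Volume `|Q| = ℓ(Q)^d`. -/
def vol (Q : DyadicCube d) : ℝ := ((2:ℝ) ^ Q.k) ^ d

/-- The dyadic cube of generation `k` of `𝒟_ω` containing the point `x`. -/
def cubeAt (ω : TransParam d) (k : ℤ) (x : Fin d → ℝ) : DyadicCube d :=
  ⟨k, fun i => ⌊(x i - shiftVec ω k i) / 2 ^ k⌋⟩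

/-- The average of `f` on `Q` with respect to `μ` (zero if `μ(Q)` is zero or infinite). -/
def avg (ω : TransParam d) (μ : Measure (Fin d → ℝ)) (Q : DyadicCube d)
    (f : (Fin d → ℝ) → ℝ) : ℝ :=
  ((μ (Q.set ω)).toReal)⁻¹ * ∫ x in Q.set ω, f x ∂μ

/-- The conditional expectation `E^μ_Q f`. -/
def eproj (ω : TransParam d) (μ : Measure (Fin d → ℝ)) (Q : DyadicCube d)
    (f : (Fin d → ℝ) → ℝ) : (Fin d → ℝ) → ℝ :=
  fun x => if x ∈ Q.set ω then avg ω μ Q f else 0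

/-- The martingale difference `Δ^μ_Q f = -E^μ_Q f + Σ_{J ∈ ch(Q)} E^μ_J f`. -/
def mdiff (ω : TransParam d) (μ : Measure (Fin d → ℝ)) (Q : DyadicCube d)
    (f : (Fin d → ℝ) → ℝ) : (Fin d → ℝ) → ℝ :=
  fun x => if x ∈ Q.set ω then
      avg ω μ (cubeAt ω (Q.k - 1) x) f - avg ω μ Q f
    else 0

end DyadicCube

/-- `h` takes equal values at points lying in the same generation-`k` cube of `𝒟_ω`. -/
def ConstOnScale {d : ℕ} (ω : TransParam d) (k : ℤ) (h : (Fin d → ℝ) → ℝ) : Prop :=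
  ∀ x y : Fin d → ℝ, DyadicCube.cubeAt ω k x = DyadicCube.cubeAt ω k y → h x = h y

/-- A generalized Haar function for `Q`: supported on `Q` and constant on the children of `Q`. -/
def IsGenHaar {d : ℕ} (ω : TransParam d) (Q : DyadicCube d) (h : (Fin d → ℝ) → ℝ) : Prop :=
  (∀ x ∉ Q.set ω, h x = 0) ∧ ConstOnScale ω (Q.k - 1) h

/-- A `μ`-weighted Haar function for `Q`: an element of the range of `Δ^μ_Q` in `L²(μ)`,
i.e. supported on `Q`, constant on the children of `Q`, with `μ`-mean zero. -/
def IsWeightedHaar {d : ℕ} (ω : TransParam d) (μ : Measure (Fin d → ℝ)) (Q : DyadicCube d)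
    (h : (Fin d → ℝ) → ℝ) : Prop :=
  IsGenHaar ω Q h ∧ (∫ x, h x ∂μ) = 0 ∧ MemLp h 2 μ

/-- An elementary generalized dyadic shift with parameters `mm`, `nn` on the lattice `𝒟_ω`:
for each cube `Q` (in `cubes`) and each pair `Q' Q'' ⊆ Q` with `ℓ(Q') = 2^{-mm} ℓ(Q)`,
`ℓ(Q'') = 2^{-nn} ℓ(Q)`, a pair of generalized Haar functions `h1 Q Q' Q''` (for `Q'`)
and `h2 Q Q' Q''` (for `Q''`) with `‖h1‖_∞ ⬝ ‖h2‖_∞ ≤ 1`. -/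
structure ElemShift (d : ℕ) (ω : TransParam d) (mm nn : ℕ) where
  cubes : Set (DyadicCube d)
  h1 : DyadicCube d → DyadicCube d → DyadicCube d → (Fin d → ℝ) → ℝ
  h2 : DyadicCube d → DyadicCube d → DyadicCube d → (Fin d → ℝ) → ℝ
  haar1 : ∀ Q Q' Q'', IsGenHaar ω Q' (h1 Q Q' Q'')
  haar2 : ∀ Q Q' Q'', IsGenHaar ω Q'' (h2 Q Q' Q'')
  normBound : ∀ Q Q' Q'' x y, |h2 Q Q' Q'' x| * |h1 Q Q' Q'' y| ≤ 1

namespace ElemShift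

variable {d : ℕ} {ω : TransParam d} {mm nn : ℕ}

/-- The kernel `a_Q(x,y) = Σ_{Q',Q''} h_{Q''}^{Q'}(x) h_{Q'}^{Q''}(y)` (so `‖a_Q‖_∞ ≤ 1`);
only the pair `Q' ∋ y`, `Q'' ∋ x` of the prescribed generations contributes. -/
def kernelAt (S : ElemShift d ω mm nn) (Q : DyadicCube d) (x y : Fin d → ℝ) : ℝ :=
  if Q ∈ S.cubes ∧
     (DyadicCube.cubeAt ω (Q.k - mm) y).set ω ⊆ Q.set ω ∧
     (DyadicCube.cubeAt ω (Q.k - nn) x).set ω ⊆ Q.set ω then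
    S.h2 Q (DyadicCube.cubeAt ω (Q.k - mm) y) (DyadicCube.cubeAt ω (Q.k - nn) x) x *
      S.h1 Q (DyadicCube.cubeAt ω (Q.k - mm) y) (DyadicCube.cubeAt ω (Q.k - nn) x) y
  else 0

/-- The full kernel `A(x,y) = Σ_Q |Q|⁻¹ a_Q(x,y)`. -/
def kernel (S : ElemShift d ω mm nn) (x y : Fin d → ℝ) : ℝ :=
  ∑' Q : DyadicCube d, (DyadicCube.vol Q)⁻¹ * S.kernelAt Q x y

/-- `𝕊_μ f (x) = ∫ A(x,y) f(y) dμ(y)`. -/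
def op (S : ElemShift d ω mm nn) (μ : Measure (Fin d → ℝ)) (f : (Fin d → ℝ) → ℝ) :
    (Fin d → ℝ) → ℝ :=
  fun x => ∫ y, S.kernel x y * f y ∂μ

/-- `𝕊^*_ν g (y) = ∫ A(x,y) g(x) dν(x)`. -/
def opStar (S : ElemShift d ω mm nn) (ν : Measure (Fin d → ℝ)) (g : (Fin d → ℝ) → ℝ) :
    (Fin d → ℝ) → ℝ :=
  fun y => ∫ x, S.kernel x y * g x ∂ν

/-- The restricted shift `𝕊_𝒜`, keeping only the cubes in `𝒜`. -/
def opRestr (S : ElemShift d ω mm nn) (𝒜 : Set (DyadicCube d)) (μ : Measure (Fin d → ℝ))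
    (f : (Fin d → ℝ) → ℝ) : (Fin d → ℝ) → ℝ :=
  fun x => ∫ y, (∑' Q : DyadicCube d,
    if Q ∈ 𝒜 then (DyadicCube.vol Q)⁻¹ * S.kernelAt Q x y else 0) * f y ∂μ

/-- The shift is ordinary (non-generalized): all its Haar functions have mean zero. -/
def Ordinary (S : ElemShift d ω mm nn) : Prop :=
  ∀ Q Q' Q'', (∫ x, S.h1 Q Q' Q'' x) = 0 ∧ (∫ x, S.h2 Q Q' Q'' x) = 0

end ElemShift

/-- The axis-parallel cube with corner `c` and side length `ℓ`. -/
def stdCube {d : ℕ} (c : Fin d → ℝ) (ℓ : ℝ) : Set (Fin d → ℝ) :=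
  {x | ∀ i, c i ≤ x i ∧ x i < c i + ℓ}

/-- `A` is an `A₂` bound for the weight `w`:
`(|Q|⁻¹∫_Q w)(|Q|⁻¹∫_Q w⁻¹) ≤ A` for all cubes `Q`. -/
def A2BoundOn {d : ℕ} (w : (Fin d → ℝ) → ℝ) (A : ℝ) : Prop :=
  ∀ (c : Fin d → ℝ) (ℓ : ℝ), 0 < ℓ →
    (∫⁻ x in stdCube c ℓ, ENNReal.ofReal (w x)) *
      (∫⁻ x in stdCube c ℓ, ENNReal.ofReal ((w x)⁻¹)) ≤
      ENNReal.ofReal A * ENNReal.ofReal (ℓ ^ d) * ENNReal.ofReal (ℓ ^ d)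

/-- `A` is a joint `A₂` bound for the pair of measures `μ`, `ν`:
`(μ(I)/|I|)(ν(I)/|I|) ≤ A` for all cubes `I`. -/
def JointA2 {d : ℕ} (μ ν : Measure (Fin d → ℝ)) (A : ℝ) : Prop :=
  ∀ (c : Fin d → ℝ) (ℓ : ℝ), 0 < ℓ →
    μ (stdCube c ℓ) * ν (stdCube c ℓ) ≤
      ENNReal.ofReal A * ENNReal.ofReal (ℓ ^ d) * ENNReal.ofReal (ℓ ^ d)

/-- Distance between two sets. -/
def setDist {α : Type*} [PseudoMetricSpace α] (S T : Set α) : ℝ :=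
  sInf ((fun p : α × α => dist p.1 p.2) '' (S ×ˢ T))

/-- The long distance `D(Q,R) = dist(Q,R) + ℓ(Q) + ℓ(R)`. -/
def longDist {d : ℕ} (ω : TransParam d) (Q R : DyadicCube d) : ℝ :=
  setDist (Q.set ω) (R.set ω) + Q.len + R.len

/-- A cube `Q ∈ 𝒟_ω` is bad (with parameters `r₀`, `γ`) if there is a much bigger cube
`R ∈ 𝒟_ω` with `dist(Q,R) < ℓ(Q)^γ ℓ(R)^{1-γ}`. -/
def IsBad {d : ℕ} (r₀ : ℕ) (γ : ℝ) (ω : TransParam d) (Q : DyadicCube d) : Prop :=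
  ∃ R : DyadicCube d, Q.k + (r₀ : ℤ) < R.k ∧
    setDist (Q.set ω) (R.set ω) < Q.len ^ γ * R.len ^ (1 - γ)

/-- `P` is the product over `ℤ` of uniform measures on `{0,1}^d`. -/
def IsBernoulliProduct {d : ℕ} (P : Measure (TransParam d)) : Prop :=
  IsProbabilityMeasure P ∧
  ∀ (F : Finset (ℤ × Fin d)) (b : ℤ × Fin d → Bool),
    P {ω | ∀ p ∈ F, ω p.1 p.2 = b p} = (1 / 2 : ℝ≥0∞) ^ F.card

/-- A Calderón–Zygmund operator on `ℝ^d` with parameters `Ccz`, `α` and unweighted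
`L²` norm at most `normT`. -/
structure CZO (d : ℕ) (Ccz α normT : ℝ) where
  T : ((Fin d → ℝ) → ℝ) →ₗ[ℝ] ((Fin d → ℝ) → ℝ)
  K : (Fin d → ℝ) → (Fin d → ℝ) → ℝ
  l2bound : ∀ f, eLpNorm (T f) 2 volume ≤ ENNReal.ofReal normT * eLpNorm f 2 volume
  size : ∀ x y, x ≠ y → |K x y| ≤ Ccz / dist x y ^ d
  smooth : ∀ x x' y : Fin d → ℝ, dist x x' < dist x y / 2 →
    |K x y - K x' y| + |K y x - K y x'| ≤ Ccz * dist x x' ^ α / dist x y ^ ((d : ℝ) + α)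
  repr : ∀ f : (Fin d → ℝ) → ℝ, Measurable f → HasCompactSupport f →
    (∃ M, ∀ y, |f y| ≤ M) → ∀ x ∉ tsupport f, T f x = ∫ y, K x y * f y


/-- The weighted paraproduct `Π^μ = Π^μ_𝕊 : L²(μ) → L²(ν)`,
`Π^μ f = Σ_{Q∈𝒟} (E^μ_Q f) Σ_{R ⊆ Q, ℓ(R)=2^{-r}ℓ(Q)} Δ^ν_R 𝕊_μ 1_Q`. -/
def shiftPara {d : ℕ} {ω : TransParam d} {mm nn : ℕ} (S : ElemShift d ω mm nn)
    (μ ν : Measure (Fin d → ℝ)) (r : ℕ) (f : (Fin d → ℝ) → ℝ) : (Fin d → ℝ) → ℝ :=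
  fun x => ∑' Q : DyadicCube d,
    DyadicCube.eproj ω μ Q f x *
      DyadicCube.mdiff ω ν (DyadicCube.cubeAt ω (Q.k - r) x)
        (S.op μ (Set.indicator (Q.set ω) fun _ => (1:ℝ))) x

/-- The density `w(Q)/|Q|` of the weight `w` on the cube `Q`. -/
def dens {d : ℕ} (ω : TransParam d) (w : (Fin d → ℝ) → ℝ) (Q : DyadicCube d) : ℝ :=
  (∫ x in Q.set ω, w x) / Q.vol

/-- The maximal cubes `Q' ∈ 𝒬`, `Q' ⊆ Q`, with `w(Q')/|Q'| > 4 w(Q)/|Q|`: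
the stopping children of `Q`. -/
def stopNext {d : ℕ} (ω : TransParam d) (w : (Fin d → ℝ) → ℝ) (𝒬 : Set (DyadicCube d))
    (Q : DyadicCube d) : Set (DyadicCube d) :=
  {Q' | (Q' ∈ 𝒬 ∧ Q'.set ω ⊆ Q.set ω ∧ 4 * dens ω w Q < dens ω w Q') ∧
    ∀ Q'' : DyadicCube d, Q'' ∈ 𝒬 → Q''.set ω ⊆ Q.set ω → 4 * dens ω w Q < dens ω w Q'' →
      Q'.set ω ⊆ Q''.set ω → Q''.set ω ⊆ Q'.set ω}

/-- The generations of stopping cubes: `𝒢*₀ = {Q₀}`, and `𝒢*_{τ+1}` consists of the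
stopping children of the cubes of `𝒢*_τ`. -/
def stopGen {d : ℕ} (ω : TransParam d) (w : (Fin d → ℝ) → ℝ) (𝒬 : Set (DyadicCube d))
    (Q₀ : DyadicCube d) : ℕ → Set (DyadicCube d)
  | 0 => {Q₀}
  | (τ + 1) => {Q' | ∃ Q ∈ stopGen ω w 𝒬 Q₀ τ, Q' ∈ stopNext ω w 𝒬 Q}

/-- The stopping family `𝒢* = 𝒢*(Q₀) = ∪_τ 𝒢*_τ`. -/
def stopFam {d : ℕ} (ω : TransParam d) (w : (Fin d → ℝ) → ℝ) (𝒬 : Set (DyadicCube d))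
    (Q₀ : DyadicCube d) : Set (DyadicCube d) :=
  ⋃ τ : ℕ, stopGen ω w 𝒬 Q₀ τ

/-- `𝒫(R) = 𝒬(R) \ ∪_{R'∈𝒢*, R'⊊R} 𝒬(R')`. -/
def stopP {d : ℕ} (ω : TransParam d) (w : (Fin d → ℝ) → ℝ) (𝒬 : Set (DyadicCube d))
    (Q₀ R : DyadicCube d) : Set (DyadicCube d) :=
  {Q | Q ∈ 𝒬 ∧ Q.set ω ⊆ R.set ω ∧
    ∀ R' ∈ stopFam ω w 𝒬 Q₀, R'.set ω ⊂ R.set ω → ¬ Q.set ω ⊆ R'.set ω}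

/-- The good part `f_{good,ω} = Σ_{I ∈ 𝒟_ω, I good} Δ_I f` of a function. -/
def goodPart {d : ℕ} (r₀ : ℕ) (γ : ℝ) (ω : TransParam d) (f : (Fin d → ℝ) → ℝ) :
    (Fin d → ℝ) → ℝ :=
  fun x => ∑' k : ℤ,
    if IsBad r₀ γ ω (DyadicCube.cubeAt ω k x) then 0
    else DyadicCube.mdiff ω volume (DyadicCube.cubeAt ω k x) f x

/-- Conditioning: keep the coordinates `ω_j`, `j < k`, from `τ` and take the coordinates
`ω_j`, `j ≥ k`, from `ω`. -/
def splice {d : ℕ} (τ ω : TransParam d) (k : ℤ) : TransParam d :=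
  fun j => if j < k then τ j else ω j

/-- The event `A` depends only on the coordinates `ω_j`, `j < k`. -/
def DependsOnPast {d : ℕ} (k : ℤ) (A : Set (TransParam d)) : Prop :=
  ∀ ω ω' : TransParam d, (∀ j < k, ω j = ω' j) → (ω ∈ A ↔ ω' ∈ A)

/-- `U` is a generalized dyadic shift with parameters `mm`, `nn` on the lattice `𝒟_ω`:
a sum of at most `4^d` elementary generalized dyadic shifts. -/
def IsGenShiftOp {d : ℕ} (ω : TransParam d) (mm nn : ℕ)
    (U : ((Fin d → ℝ) → ℝ) → ((Fin d → ℝ) → ℝ)) : Prop :=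
  ∃ L : List (ElemShift d ω mm nn), L.length ≤ 4 ^ d ∧
    ∀ f x, U f x = (L.map fun S => S.op volume f x).sum

/-- `U` is an ordinary (non-generalized) dyadic shift with parameters `mm`, `nn`:
a sum of at most `4^d` elementary dyadic shifts built from mean-zero Haar functions. -/
def IsOrdShiftOp {d : ℕ} (ω : TransParam d) (mm nn : ℕ)
    (U : ((Fin d → ℝ) → ℝ) → ((Fin d → ℝ) → ℝ)) : Prop :=
  ∃ L : List (ElemShift d ω mm nn), L.length ≤ 4 ^ d ∧ (∀ S ∈ L, S.Ordinary) ∧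
    ∀ f x, U f x = (L.map fun S => S.op volume f x).sum

/-- The dyadic paraproduct `Π f = Σ_Q (E_Q f) b_Q` with symbol `b = (b_Q)_Q = (Δ_Q T1)_Q`. -/
def paraOp {d : ℕ} (ω : TransParam d) (b : DyadicCube d → (Fin d → ℝ) → ℝ)
    (f : (Fin d → ℝ) → ℝ) : (Fin d → ℝ) → ℝ :=
  fun x => ∑' Q : DyadicCube d, DyadicCube.eproj ω volume Q f x * b Q x

/-- The adjoint `Π^*` of the dyadic paraproduct with symbol `b`:
`Π^* f = Σ_Q 1_Q |Q|⁻¹ ∫ f b_Q`. -/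
def paraOpAdj {d : ℕ} (ω : TransParam d) (b : DyadicCube d → (Fin d → ℝ) → ℝ)
    (f : (Fin d → ℝ) → ℝ) : (Fin d → ℝ) → ℝ :=
  fun x => ∑' Q : DyadicCube d,
    Set.indicator (Q.set ω) (fun _ => (1:ℝ)) x * (DyadicCube.vol Q)⁻¹ * (∫ y, f y * b Q y)

/-- `b = (b_Q)_Q` is the family `(Δ_Q T1)_Q` for the operator with adjoint `Tadj`:
each `b_Q` is supported on `Q`, constant on the children of `Q`, has mean zero, and
satisfies the duality relation `⟨b_Q, g⟩ = ⟨1, Tadj Δ_Q g⟩`. -/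
def IsParaSymbol {d : ℕ} (ω : TransParam d)
    (Tadj : ((Fin d → ℝ) → ℝ) → ((Fin d → ℝ) → ℝ))
    (b : DyadicCube d → (Fin d → ℝ) → ℝ) : Prop :=
  ∀ Q : DyadicCube d, IsGenHaar ω Q (b Q) ∧ (∫ x, b Q x) = 0 ∧
    ∀ g : (Fin d → ℝ) → ℝ, Measurable g → HasCompactSupport g → (∃ M, ∀ y, |g y| ≤ M) →
      (∫ x, b Q x * g x) = ∫ x, Tadj (DyadicCube.mdiff ω volume Q g) x

/-- `Tstar` is the adjoint of `T` on (unweighted) `L²`. -/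
def IsAdjointPair {d : ℕ} (T Tstar : ((Fin d → ℝ) → ℝ) → ((Fin d → ℝ) → ℝ)) : Prop :=
  ∀ f g : (Fin d → ℝ) → ℝ, MemLp f 2 volume → MemLp g 2 volume →
    (∫ x, T f x * g x) = ∫ x, f x * Tstar g x

/-- `T̃_ω = T - Π^ω_T - (Π^ω_{T*})^*`, where `b` plays the role of `(Δ_Q T1)_Q` and
`bstar` the role of `(Δ_Q T^*1)_Q`. -/
def tildeOp {d : ℕ} {Ccz α normT : ℝ} (Op : CZO d Ccz α normT) (ω : TransParam d)
    (b bstar : DyadicCube d → (Fin d → ℝ) → ℝ) (f : (Fin d → ℝ) → ℝ) : (Fin d → ℝ) → ℝ :=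
  fun x => Op.T f x - paraOp ω b f x - paraOpAdj ω bstar f x
/-!
The stopping children `C` of a cube `Q` have `w(C)/|C| > 4 w(Q)/|Q|` and are pairwise disjoint, so
`Σ |C| ≤ |Q|/4` and the uncovered part `E(Q) = Q \ ⋃ C` has `|E(Q)| ≥ 3|Q|/4`. Cauchy–Schwarz
`|E|² ≤ w(E) w⁻¹(E) ≤ w(E) w⁻¹(Q)` and the `A₂` bound `w(Q) w⁻¹(Q) ≤ [w]_{A₂} |Q|²` then give
`w(Q) ≤ (16/9) [w]_{A₂} w(E(Q))`. By the nesting of dyadic cubes the sets `E(Q)`, `Q ∈ 𝒢*`, are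
pairwise disjoint, and summing over `Q ⊆ R` gives the bound with `16/9 ≤ 16/3`.
-/

open Function

theorem Set.Ico_subset_Ico_of_mem_of_sub_mem_zmultiples {a b s S x : ℝ} (hs : 0 < s)
    (hba : b - a ∈ AddSubgroup.zmultiples s) (hS : S ∈ AddSubgroup.zmultiples s)
    (hxa : x ∈ Ico a (a + s)) (hxb : x ∈ Ico b (b + S)) : Ico a (a + s) ⊆ Ico b (b + S) := by
  obtain ⟨L, hL⟩ := AddSubgroup.mem_zmultiples_iff.1 hba
  obtain ⟨N, rfl⟩ := AddSubgroup.mem_zmultiples_iff.1 hS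
  rw [zsmul_eq_mul] at hL hxb ⊢
  have hL : L ≤ 0 := by
    have : (L : ℝ) < 1 := by by_contra! h; nlinarith [hxa.2, hxb.1]
    exact Int.lt_add_one_iff.1 (by exact_mod_cast this)
  have hLN : 1 ≤ L + N := by
    have : (-L : ℝ) < N := by by_contra! h; nlinarith [hxa.1, hxb.2]
    have : -L < N := by exact_mod_cast this
    omega
  have hL' : (L : ℝ) ≤ 0 := by exact_mod_cast hL
  have hLN' : (1 : ℝ) ≤ L + N := by exact_mod_cast hLN
  rintro y ⟨hy₁, hy₂⟩
  constructor <;> nlinarith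

theorem stdCube_eq_pi {d : ℕ} (c : Fin d → ℝ) (ℓ : ℝ) :
    stdCube c ℓ = univ.pi fun i => Ico (c i) (c i + ℓ) := by
  ext x
  simp [stdCube]

theorem measurableSet_stdCube {d : ℕ} (c : Fin d → ℝ) (ℓ : ℝ) : MeasurableSet (stdCube c ℓ) := by
  rw [stdCube_eq_pi]
  exact MeasurableSet.univ_pi fun _ => measurableSet_Ico

theorem volume_stdCube {d : ℕ} (c : Fin d → ℝ) {ℓ : ℝ} (hℓ : 0 ≤ ℓ) :
    volume (stdCube c ℓ) = ENNReal.ofReal (ℓ ^ d) := by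
  simp [stdCube_eq_pi, volume_pi_pi, Real.volume_Ico, ENNReal.ofReal_pow hℓ]

theorem self_mem_stdCube {d : ℕ} (c : Fin d → ℝ) {ℓ : ℝ} (hℓ : 0 < ℓ) : c ∈ stdCube c ℓ :=
  fun _ => ⟨le_rfl, lt_add_of_pos_right _ hℓ⟩

theorem stdCube_subset_of_mem {d : ℕ} {c b x : Fin d → ℝ} {s S : ℝ} (hs : 0 < s)
    (hbc : ∀ i, b i - c i ∈ AddSubgroup.zmultiples s) (hS : S ∈ AddSubgroup.zmultiples s)
    (hxc : x ∈ stdCube c s) (hxb : x ∈ stdCube b S) : stdCube c s ⊆ stdCube b S := by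
  rw [stdCube_eq_pi, stdCube_eq_pi] at *
  exact pi_mono fun i _ =>
    Ico_subset_Ico_of_mem_of_sub_mem_zmultiples hs (hbc i) hS (hxc i trivial) (hxb i trivial)

theorem MeasureTheory.LocallyIntegrable.integrableOn_stdCube {d : ℕ} {f : (Fin d → ℝ) → ℝ}
    (hf : LocallyIntegrable f volume) (c : Fin d → ℝ) (ℓ : ℝ) : IntegrableOn f (stdCube c ℓ) :=
  (hf.integrableOn_isCompact (isCompact_univ_pi fun i => isCompact_Icc (a := c i)
    (b := c i + ℓ))).mono_set (by rw [stdCube_eq_pi]; exact pi_mono fun _ _ => Ico_subset_Icc_self)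

theorem two_zpow_mem_zmultiples {k j : ℤ} (h : k ≤ j) :
    (2 : ℝ) ^ j ∈ AddSubgroup.zmultiples ((2 : ℝ) ^ k) := by
  refine AddSubgroup.mem_zmultiples_iff.2 ⟨2 ^ (j - k).toNat, ?_⟩
  rw [zsmul_eq_mul, Int.cast_pow, Int.cast_ofNat, ← zpow_natCast, Int.toNat_of_nonneg (by omega),
    ← zpow_add₀ two_ne_zero, sub_add_cancel]

theorem summable_two_zpow_Iio (k : ℤ) : Summable fun j : Iio k => (2 : ℝ) ^ (j : ℤ) := by
  refine (((summable_geometric_two).mul_left ((2 : ℝ) ^ k)).comp_injective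
    (i := fun j : Iio k => (k - j).toNat) fun a b h => Subtype.ext (by
      have := a.2; have := b.2; simp only [mem_Iio] at *; omega)).congr ?_
  rintro ⟨j, hj⟩
  simp only [Function.comp_apply, one_div, inv_pow]
  rw [← zpow_natCast, Int.toNat_of_nonneg (by simp at hj; omega), ← zpow_neg,
    ← zpow_add₀ two_ne_zero]
  ring_nf

namespace DyadicCube

variable {d : ℕ} (ω : TransParam d)

theorem shiftVec_eq_add_sum (i : Fin d) {k K : ℤ} (h : k ≤ K) :
    shiftVec ω K i = shiftVec ω k i + ∑ j ∈ Finset.Ico k K, if ω j i then (2 : ℝ) ^ j else 0 := by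
  set g : ℤ → ℝ := fun j => if ω j i then (2 : ℝ) ^ j else 0
  have hg : Summable fun j : Iio k => g j :=
    (summable_two_zpow_Iio k).of_nonneg_of_le (fun j => by dsimp only [g]; split_ifs <;> positivity)
      (fun j => by dsimp only [g]; split_ifs <;> simp [zpow_nonneg])
  calc shiftVec ω K i = ∑' j : ↥(Iio k ∪ Ico k K), g j := by
        rw [Iio_union_Ico_eq_Iio h]; rfl
    _ = ∑' j : Iio k, g j + ∑' j : Ico k K, g j :=
        hg.tsum_union_disjoint ((Iio_disjoint_Ici le_rfl).mono_right Ico_subset_Ici_self)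
          Summable.of_finite
    _ = _ := by rw [← Finset.coe_Ico, Finset.tsum_subtype']; rfl

theorem shiftVec_sub_mem_zmultiples (i : Fin d) {k K : ℤ} (h : k ≤ K) :
    shiftVec ω K i - shiftVec ω k i ∈ AddSubgroup.zmultiples ((2 : ℝ) ^ k) := by
  rw [shiftVec_eq_add_sum ω i h, add_sub_cancel_left]
  refine AddSubgroup.sum_mem _ fun j hj => ?_
  split_ifs
  · exact two_zpow_mem_zmultiples (Finset.mem_Ico.1 hj).1
  · exact zero_mem _

def corner (Q : DyadicCube d) : Fin d → ℝ := fun i => Q.m i * 2 ^ Q.k + shiftVec ω Q.k i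

variable {ω}

theorem len_pos (Q : DyadicCube d) : 0 < Q.len := zpow_pos two_pos _

theorem set_eq_stdCube (Q : DyadicCube d) : Q.set ω = stdCube (Q.corner ω) Q.len := by
  ext x
  refine forall_congr' fun i => and_congr Iff.rfl ?_
  rw [corner, len, add_one_mul, add_right_comm]

theorem corner_mem (Q : DyadicCube d) : Q.corner ω ∈ Q.set ω := by
  rw [set_eq_stdCube]; exact self_mem_stdCube _ Q.len_pos

theorem measurableSet_set (Q : DyadicCube d) : MeasurableSet (Q.set ω) := by
  rw [set_eq_stdCube]; exact measurableSet_stdCube _ _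

theorem volume_set (Q : DyadicCube d) : volume (Q.set ω) = ENNReal.ofReal (Q.len ^ d) := by
  rw [set_eq_stdCube, volume_stdCube _ Q.len_pos.le]

theorem volume_set_ne_zero (Q : DyadicCube d) : volume (Q.set ω) ≠ 0 := by
  rw [volume_set]; exact ENNReal.ofReal_ne_zero_iff.2 (pow_pos Q.len_pos d)

theorem volume_set_ne_top (Q : DyadicCube d) : volume (Q.set ω) ≠ ⊤ := by
  rw [volume_set]; exact ENNReal.ofReal_ne_top

theorem corner_sub_mem_zmultiples {Q R : DyadicCube d} (hk : Q.k ≤ R.k) (i : Fin d) :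
    R.corner ω i - Q.corner ω i ∈ AddSubgroup.zmultiples ((2 : ℝ) ^ Q.k) := by
  have := add_mem (sub_mem (zsmul_mem (two_zpow_mem_zmultiples hk) (R.m i))
    (zsmul_mem (AddSubgroup.mem_zmultiples ((2 : ℝ) ^ Q.k)) (Q.m i)))
    (shiftVec_sub_mem_zmultiples ω i hk)
  convert this using 1
  simp only [corner, zsmul_eq_mul]
  ring

theorem set_subset_of_mem {Q R : DyadicCube d} (hk : Q.k ≤ R.k) {x : Fin d → ℝ}
    (hxQ : x ∈ Q.set ω) (hxR : x ∈ R.set ω) : Q.set ω ⊆ R.set ω := by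
  simp only [set_eq_stdCube] at *
  exact stdCube_subset_of_mem Q.len_pos (corner_sub_mem_zmultiples hk)
    (two_zpow_mem_zmultiples hk) hxQ hxR

theorem set_subset_or_subset_of_mem {Q R : DyadicCube d} {x : Fin d → ℝ}
    (hxQ : x ∈ Q.set ω) (hxR : x ∈ R.set ω) : Q.set ω ⊆ R.set ω ∨ R.set ω ⊆ Q.set ω :=
  (le_total Q.k R.k).imp (set_subset_of_mem · hxQ hxR) (set_subset_of_mem · hxR hxQ)

theorem set_injective (hd : 0 < d) : Function.Injective (set ω : DyadicCube d → _) := by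
  intro Q R h
  -- Equal sets have equal volumes `ℓ ^ d`, and for `d ≠ 0` this fixes the scale.
  have hk : Q.k = R.k := by
    have hvol := congrArg volume h
    rw [volume_set, volume_set, ENNReal.ofReal_eq_ofReal_iff (pow_nonneg Q.len_pos.le d)
      (pow_nonneg R.len_pos.le d), pow_left_inj₀ Q.len_pos.le R.len_pos.le hd.ne'] at hvol
    exact (zpow_right_inj₀ two_pos (by norm_num)).1 hvol
  have hQR := R.corner_mem (ω := ω)
  have hRQ := Q.corner_mem (ω := ω)
  rw [← h, set_eq_stdCube] at hQR
  rw [h, set_eq_stdCube] at hRQ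
  have hm : ∀ i, Q.m i = R.m i := fun i => by
    have hc := le_antisymm (hQR i).1 (hRQ i).1
    simp only [corner, hk, add_left_inj] at hc
    exact_mod_cast mul_right_cancel₀ (zpow_pos two_pos R.k).ne' hc
  cases Q; cases R
  simp_all [funext_iff]

end DyadicCube

section Weight

variable {α : Type*} [MeasurableSpace α] {μ : Measure α} {f : α → ℝ}

theorem measure_univ_mul_le_lintegral_mul_lintegral_inv (hf : AEMeasurable f μ)
    (hpos : ∀ᵐ x ∂μ, 0 < f x) :
    μ univ * μ univ ≤ (∫⁻ x, ENNReal.ofReal (f x) ∂μ) * ∫⁻ x, ENNReal.ofReal (f x)⁻¹ ∂μ := by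
  set u : α → ℝ≥0∞ := fun x => ENNReal.ofReal (f x) ^ (1 / 2 : ℝ)
  set v : α → ℝ≥0∞ := fun x => ENNReal.ofReal (f x)⁻¹ ^ (1 / 2 : ℝ)
  have hsq : ∀ c : ℝ≥0∞, (c ^ (1 / 2 : ℝ)) ^ (2 : ℝ) = c := fun c => by
    rw [← ENNReal.rpow_mul]; norm_num
  have hhalf : ∀ c : ℝ≥0∞, c ^ (1 / 2 : ℝ) * c ^ (1 / 2 : ℝ) = c := fun c => by
    rw [← ENNReal.rpow_add_of_nonneg _ _ (by norm_num) (by norm_num)]; norm_num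
  have huv : ∀ᵐ x ∂μ, (u * v) x = 1 := by
    filter_upwards [hpos] with x hx
    rw [Pi.mul_apply, ← ENNReal.mul_rpow_of_nonneg _ _ (by norm_num), ← ENNReal.ofReal_mul hx.le,
      mul_inv_cancel₀ hx.ne', ENNReal.ofReal_one, ENNReal.one_rpow]
  have hHolder : μ univ ≤ (∫⁻ x, ENNReal.ofReal (f x) ∂μ) ^ (1 / 2 : ℝ) *
      (∫⁻ x, ENNReal.ofReal (f x)⁻¹ ∂μ) ^ (1 / 2 : ℝ) := by
    have := ENNReal.lintegral_mul_le_Lp_mul_Lq μ Real.HolderConjugate.two_two (f := u) (g := v)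
      (hf.ennreal_ofReal.pow_const _) (hf.inv.ennreal_ofReal.pow_const _)
    simpa only [lintegral_congr_ae huv, lintegral_one, u, v, hsq] using this
  calc μ univ * μ univ ≤ _ := mul_le_mul' hHolder hHolder
    _ = _ := by rw [mul_mul_mul_comm, hhalf, hhalf]

theorem setLIntegral_ofReal_pos (hf : AEMeasurable f μ) (hpos : ∀ᵐ x ∂μ, 0 < f x) {s : Set α}
    (hs : μ s ≠ 0) : 0 < ∫⁻ x in s, ENNReal.ofReal (f x) ∂μ := by
  refine pos_iff_ne_zero.2 fun h => hs ?_
  rw [lintegral_eq_zero_iff' hf.restrict.ennreal_ofReal] at h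
  have : ∀ᵐ x ∂μ.restrict s, False := by
    filter_upwards [h, ae_restrict_of_ae hpos] with x hx hx'
    simp only [Pi.zero_apply, ENNReal.ofReal_eq_zero] at hx
    linarith
  exact Measure.restrict_eq_zero.1 (ae_eq_bot.1 (Filter.eventually_false_iff_eq_bot.1 this))

theorem three_mul_measure_le_four_mul_measure_diff_iUnion {ι : Type*} [Countable ι]
    {g : α → ℝ≥0∞} {Q : Set α} {C : ι → Set α} (hCQ : ∀ i, C i ⊆ Q)
    (hC : ∀ i, MeasurableSet (C i)) (hdisj : Pairwise (Disjoint on C))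
    (hg₀ : ∫⁻ x in Q, g x ∂μ ≠ 0) (hg : ∫⁻ x in Q, g x ∂μ ≠ ⊤) (hμ : μ Q ≠ ⊤)
    (hdens : ∀ i, 4 * (∫⁻ x in Q, g x ∂μ) * μ (C i) ≤ (∫⁻ x in C i, g x ∂μ) * μ Q) :
    3 * μ Q ≤ 4 * μ (Q \ ⋃ i, C i) := by
  set W := ∫⁻ x in Q, g x ∂μ
  have hsum : 4 * ∑' i, μ (C i) ≤ μ Q := by
    refine (ENNReal.mul_le_mul_iff_right hg₀ hg).1 ?_
    calc W * (4 * ∑' i, μ (C i)) = ∑' i, 4 * W * μ (C i) := by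
          rw [ENNReal.tsum_mul_left, ← mul_assoc, mul_comm W]
      _ ≤ ∑' i, (∫⁻ x in C i, g x ∂μ) * μ Q := ENNReal.tsum_le_tsum hdens
      _ = (∫⁻ x in ⋃ i, C i, g x ∂μ) * μ Q := by
          rw [ENNReal.tsum_mul_right, lintegral_iUnion hC hdisj]
      _ ≤ W * μ Q := by gcongr; exact lintegral_mono_set (iUnion_subset hCQ)
  have hcover : μ Q ≤ μ (Q \ ⋃ i, C i) + ∑' i, μ (C i) :=
    calc μ Q ≤ μ (Q \ ⋃ i, C i) + μ (⋃ i, C i) :=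
          (measure_mono (subset_sdiff_union Q _)).trans (measure_union_le _ _)
      _ ≤ _ := by gcongr; exact measure_iUnion_le C
  refine (ENNReal.add_le_add_iff_right hμ).1 ?_
  calc 3 * μ Q + μ Q = 4 * μ Q := by ring
    _ ≤ 4 * μ (Q \ ⋃ i, C i) + 4 * ∑' i, μ (C i) := by rw [← mul_add]; gcongr
    _ ≤ 4 * μ (Q \ ⋃ i, C i) + μ Q := by gcongr

theorem nine_mul_setLIntegral_le (hf : AEMeasurable f μ) (hpos : ∀ᵐ x ∂μ, 0 < f x)
    {Q E : Set α} {A : ℝ≥0∞} (hEQ : E ⊆ Q)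
    (hA : (∫⁻ x in Q, ENNReal.ofReal (f x) ∂μ) * (∫⁻ x in Q, ENNReal.ofReal (f x)⁻¹ ∂μ) ≤
      A * μ Q * μ Q)
    (h34 : 3 * μ Q ≤ 4 * μ E) (hμ₀ : μ Q ≠ 0) (hμ : μ Q ≠ ⊤) :
    9 * ∫⁻ x in Q, ENNReal.ofReal (f x) ∂μ ≤ 16 * A * ∫⁻ x in E, ENNReal.ofReal (f x) ∂μ := by
  have hCS := measure_univ_mul_le_lintegral_mul_lintegral_inv (μ := μ.restrict E) hf.restrict
    (ae_restrict_of_ae hpos)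
  rw [Measure.restrict_apply_univ] at hCS
  have hμμ₀ : μ Q * μ Q ≠ 0 := mul_ne_zero hμ₀ hμ₀
  have hμμ : μ Q * μ Q ≠ ⊤ := ENNReal.mul_ne_top hμ hμ
  refine (ENNReal.mul_le_mul_iff_right hμμ₀ hμμ).1 ?_
  calc μ Q * μ Q * (9 * ∫⁻ x in Q, ENNReal.ofReal (f x) ∂μ)
      = (3 * μ Q) * (3 * μ Q) * ∫⁻ x in Q, ENNReal.ofReal (f x) ∂μ := by ring
    _ ≤ (4 * μ E) * (4 * μ E) * ∫⁻ x in Q, ENNReal.ofReal (f x) ∂μ := by gcongr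
    _ = 16 * (μ E * μ E) * ∫⁻ x in Q, ENNReal.ofReal (f x) ∂μ := by ring
    _ ≤ 16 * ((∫⁻ x in E, ENNReal.ofReal (f x) ∂μ) * ∫⁻ x in Q, ENNReal.ofReal (f x)⁻¹ ∂μ) *
        ∫⁻ x in Q, ENNReal.ofReal (f x) ∂μ := by
      gcongr 16 * ?_ * _
      exact hCS.trans (by gcongr)
    _ = 16 * (∫⁻ x in E, ENNReal.ofReal (f x) ∂μ) * ((∫⁻ x in Q, ENNReal.ofReal (f x) ∂μ) *
        ∫⁻ x in Q, ENNReal.ofReal (f x)⁻¹ ∂μ) := by ring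
    _ ≤ 16 * (∫⁻ x in E, ENNReal.ofReal (f x) ∂μ) * (A * μ Q * μ Q) := by gcongr
    _ = μ Q * μ Q * (16 * A * ∫⁻ x in E, ENNReal.ofReal (f x) ∂μ) := by ring

end Weight

instance {d : ℕ} : Countable (DyadicCube d) :=
  Function.Injective.countable (f := fun Q : DyadicCube d => (Q.k, Q.m))
    fun Q R h => by cases Q; cases R; simpa using h

section Stopping

variable {d : ℕ} {ω : TransParam d} {w : (Fin d → ℝ) → ℝ} {A : ℝ} {𝒬 : Set (DyadicCube d)}
  {Q₀ : DyadicCube d}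

theorem setLIntegral_cube_ne_top (hwl : LocallyIntegrable w volume) (Q : DyadicCube d) :
    ∫⁻ x in Q.set ω, ENNReal.ofReal (w x) ≠ ⊤ := by
  rw [Q.set_eq_stdCube]
  exact (hwl.integrableOn_stdCube _ _).lintegral_lt_top.ne

theorem setLIntegral_cube_ne_zero (hwpos : ∀ᵐ x : Fin d → ℝ, 0 < w x)
    (hwl : LocallyIntegrable w volume) (Q : DyadicCube d) :
    ∫⁻ x in Q.set ω, ENNReal.ofReal (w x) ≠ 0 :=
  (setLIntegral_ofReal_pos hwl.aestronglyMeasurable.aemeasurable hwpos Q.volume_set_ne_zero).ne'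

theorem dens_eq_toReal_div (hwpos : ∀ᵐ x : Fin d → ℝ, 0 < w x)
    (hwl : LocallyIntegrable w volume) (Q : DyadicCube d) :
    dens ω w Q = (∫⁻ x in Q.set ω, ENNReal.ofReal (w x)).toReal / (volume (Q.set ω)).toReal := by
  rw [dens, integral_eq_lintegral_of_nonneg_ae (ae_restrict_of_ae (hwpos.mono fun _ h => h.le))
    hwl.aestronglyMeasurable.restrict, Q.volume_set,
    ENNReal.toReal_ofReal (pow_nonneg Q.len_pos.le d)]
  rfl

theorem four_mul_mul_le_of_four_mul_dens_lt (hwpos : ∀ᵐ x : Fin d → ℝ, 0 < w x)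
    (hwl : LocallyIntegrable w volume) {Q C : DyadicCube d} (h : 4 * dens ω w Q < dens ω w C) :
    4 * (∫⁻ x in Q.set ω, ENNReal.ofReal (w x)) * volume (C.set ω) ≤
      (∫⁻ x in C.set ω, ENNReal.ofReal (w x)) * volume (Q.set ω) := by
  have hpos : ∀ R : DyadicCube d, 0 < (volume (R.set ω)).toReal := fun R =>
    ENNReal.toReal_pos R.volume_set_ne_zero R.volume_set_ne_top
  rw [dens_eq_toReal_div hwpos hwl, dens_eq_toReal_div hwpos hwl, ← mul_div_assoc,
    div_lt_div_iff₀ (hpos Q) (hpos C)] at h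
  have := setLIntegral_cube_ne_top (ω := ω) hwl Q
  have := setLIntegral_cube_ne_top (ω := ω) hwl C
  have := Q.volume_set_ne_top (ω := ω)
  have := C.volume_set_ne_top (ω := ω)
  rw [← ENNReal.toReal_le_toReal (by finiteness) (by finiteness)]
  simp only [ENNReal.toReal_mul, ENNReal.toReal_ofNat]
  exact h.le

theorem A2BoundOn.setLIntegral_mul_le (hA2 : A2BoundOn w A) (Q : DyadicCube d) :
    (∫⁻ x in Q.set ω, ENNReal.ofReal (w x)) * (∫⁻ x in Q.set ω, ENNReal.ofReal (w x)⁻¹) ≤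
      ENNReal.ofReal A * volume (Q.set ω) * volume (Q.set ω) := by
  rw [Q.volume_set, Q.set_eq_stdCube]
  exact hA2 _ _ Q.len_pos

theorem subset_of_mem_stopGen {τ : ℕ} {Q : DyadicCube d} (hQ : Q ∈ stopGen ω w 𝒬 Q₀ τ) :
    Q.set ω ⊆ Q₀.set ω := by
  induction τ generalizing Q with
  | zero => obtain rfl : Q = Q₀ := hQ; exact subset_rfl
  | succ τ ih =>
    obtain ⟨P, hP, hQP⟩ := hQ
    exact hQP.1.2.1.trans (ih hP)

theorem eq_of_mem_stopNext_of_subset (hd : 0 < d) {Q C C' : DyadicCube d}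
    (hC : C ∈ stopNext ω w 𝒬 Q) (hC' : C' ∈ stopNext ω w 𝒬 Q) (h : C.set ω ⊆ C'.set ω) :
    C = C' :=
  DyadicCube.set_injective hd (h.antisymm (hC.2 C' hC'.1.1 hC'.1.2.1 hC'.1.2.2 h))

theorem pairwise_disjoint_stopNext (hd : 0 < d) (Q : DyadicCube d) :
    Pairwise (Disjoint on fun C : stopNext ω w 𝒬 Q => C.1.set ω) := by
  intro C C' hne
  refine not_not.1 fun h => hne ?_
  obtain ⟨x, hxC, hxC'⟩ := not_disjoint_iff.1 h
  rcases DyadicCube.set_subset_or_subset_of_mem hxC hxC' with h | h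
  · exact Subtype.ext (eq_of_mem_stopNext_of_subset hd C.2 C'.2 h)
  · exact Subtype.ext (eq_of_mem_stopNext_of_subset hd C'.2 C.2 h).symm

theorem eq_or_exists_mem_stopNext_of_subset (hd : 0 < d) {Q P : DyadicCube d}
    (hQ : Q ∈ stopFam ω w 𝒬 Q₀) (hP : P ∈ stopFam ω w 𝒬 Q₀) (hQP : Q.set ω ⊆ P.set ω) :
    Q = P ∨ ∃ C ∈ stopNext ω w 𝒬 P, Q.set ω ⊆ C.set ω := by
  obtain ⟨τ, hQτ⟩ := mem_iUnion.1 hQ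
  obtain ⟨s, hPs⟩ := mem_iUnion.1 hP
  clear hQ hP
  -- Inducting on the sum of the two generations lets the roles of `Q` and `P` be swapped.
  induction hn : τ + s using Nat.strong_induction_on generalizing τ s Q P with
  | _ n ih =>
  cases τ with
  | zero =>
    obtain rfl : Q = Q₀ := hQτ
    exact Or.inl (DyadicCube.set_injective hd (hQP.antisymm (subset_of_mem_stopGen hPs)))
  | succ τ =>
    obtain ⟨P', hP', hQP'⟩ := hQτ
    have hx := Q.corner_mem (ω := ω)
    rcases DyadicCube.set_subset_or_subset_of_mem (hQP'.1.2.1 hx) (hQP hx) with h | h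
    · rcases ih (τ + s) (by omega) h τ hP' s hPs rfl with rfl | ⟨C, hC, hP'C⟩
      · exact Or.inr ⟨Q, hQP', subset_rfl⟩
      · exact Or.inr ⟨C, hC, hQP'.1.2.1.trans hP'C⟩
    · rcases ih (s + τ) (by omega) h s hPs τ hP' rfl with rfl | ⟨C, hC, hPC⟩
      · exact Or.inr ⟨Q, hQP', subset_rfl⟩
      · obtain rfl := eq_of_mem_stopNext_of_subset hd hQP' hC (hQP.trans hPC)
        exact Or.inl (DyadicCube.set_injective hd (hQP.antisymm hPC))

end Stopping

section Carleson

variable {d : ℕ} {ω : TransParam d} {w : (Fin d → ℝ) → ℝ} {A : ℝ} {𝒬 : Set (DyadicCube d)}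
  {Q₀ : DyadicCube d}

variable (ω w 𝒬) in
def stopUncovered (Q : DyadicCube d) : Set (Fin d → ℝ) :=
  Q.set ω \ ⋃ C : stopNext ω w 𝒬 Q, C.1.set ω

theorem measurableSet_stopUncovered (Q : DyadicCube d) :
    MeasurableSet (stopUncovered ω w 𝒬 Q) :=
  Q.measurableSet_set.diff (.iUnion fun C => C.1.measurableSet_set)

theorem pairwiseDisjoint_stopUncovered (hd : 0 < d) :
    (stopFam ω w 𝒬 Q₀).PairwiseDisjoint (stopUncovered ω w 𝒬) := by
  have key : ∀ {Q P}, Q ∈ stopFam ω w 𝒬 Q₀ → P ∈ stopFam ω w 𝒬 Q₀ → Q ≠ P →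
      Q.set ω ⊆ P.set ω → Disjoint (stopUncovered ω w 𝒬 Q) (stopUncovered ω w 𝒬 P) := by
    intro Q P hQ hP hne hQP
    obtain ⟨C, hC, hQC⟩ := (eq_or_exists_mem_stopNext_of_subset hd hQ hP hQP).resolve_left hne
    exact disjoint_left.2 fun x hxQ hxP => hxP.2 (mem_iUnion.2 ⟨⟨C, hC⟩, hQC hxQ.1⟩)
  intro Q hQ P hP hne
  refine disjoint_left.2 fun x hxQ hxP => ?_
  rcases DyadicCube.set_subset_or_subset_of_mem hxQ.1 hxP.1 with h | h
  · exact disjoint_left.1 (key hQ hP hne h) hxQ hxP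
  · exact disjoint_left.1 (key hP hQ hne.symm h) hxP hxQ

theorem nine_mul_setLIntegral_le_stopUncovered (hd : 0 < d)
    (hwpos : ∀ᵐ x : Fin d → ℝ, 0 < w x) (hwl : LocallyIntegrable w volume)
    (hA2 : A2BoundOn w A) (Q : DyadicCube d) :
    9 * ∫⁻ x in Q.set ω, ENNReal.ofReal (w x) ≤
      16 * ENNReal.ofReal A * ∫⁻ x in stopUncovered ω w 𝒬 Q, ENNReal.ofReal (w x) :=
  nine_mul_setLIntegral_le hwl.aestronglyMeasurable.aemeasurable hwpos sdiff_subset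
    (hA2.setLIntegral_mul_le Q)
    (three_mul_measure_le_four_mul_measure_diff_iUnion (fun C => C.2.1.2.1)
      (fun C => C.1.measurableSet_set) (pairwise_disjoint_stopNext hd Q)
      (setLIntegral_cube_ne_zero hwpos hwl Q) (setLIntegral_cube_ne_top hwl Q) Q.volume_set_ne_top
      fun C => four_mul_mul_le_of_four_mul_dens_lt hwpos hwl C.2.1.2.2)
    Q.volume_set_ne_zero Q.volume_set_ne_top

theorem tsum_setLIntegral_stopUncovered_le (hd : 0 < d) (R : DyadicCube d) :
    ∑' Q : {Q : DyadicCube d // Q ∈ stopFam ω w 𝒬 Q₀ ∧ Q.set ω ⊆ R.set ω},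
      ∫⁻ x in stopUncovered ω w 𝒬 Q.1, ENNReal.ofReal (w x) ≤
      ∫⁻ x in R.set ω, ENNReal.ofReal (w x) := by
  have hdisj : Pairwise (Disjoint on fun Q : {Q : DyadicCube d //
      Q ∈ stopFam ω w 𝒬 Q₀ ∧ Q.set ω ⊆ R.set ω} => stopUncovered ω w 𝒬 Q.1) :=
    fun Q P hne => pairwiseDisjoint_stopUncovered hd Q.2.1 P.2.1 (Subtype.coe_ne_coe.2 hne)
  have hm : ∀ Q : {Q : DyadicCube d // Q ∈ stopFam ω w 𝒬 Q₀ ∧ Q.set ω ⊆ R.set ω},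
      MeasurableSet (stopUncovered ω w 𝒬 Q.1) := fun Q => measurableSet_stopUncovered Q.1
  rw [← lintegral_iUnion (μ := volume) hm hdisj]
  exact lintegral_mono_set (iUnion_subset fun Q => sdiff_subset.trans Q.2.2)

end Carleson

theorem statement17_general (d : ℕ) (hd : 0 < d) (ω : TransParam d)
    (w : (Fin d → ℝ) → ℝ) (A : ℝ)
    (hwpos : ∀ᵐ x : Fin d → ℝ, 0 < w x) (hwl : LocallyIntegrable w volume)
    (hA2 : A2BoundOn w A)
    (𝒬 : Set (DyadicCube d)) (Q₀ : DyadicCube d) :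
    ∀ R : DyadicCube d,
      (∑' Q : {Q : DyadicCube d // Q ∈ stopFam ω w 𝒬 Q₀ ∧ Q.set ω ⊆ R.set ω},
        ∫⁻ x in (Q.1).set ω, ENNReal.ofReal (w x)) ≤
        ENNReal.ofReal ((16 / 3) * A) * ∫⁻ x in R.set ω, ENNReal.ofReal (w x) := by
  intro R
  have hconst : 16 * ENNReal.ofReal A ≤ 9 * ENNReal.ofReal ((16 / 3) * A) := by
    rw [ENNReal.ofReal_mul (by norm_num), ← mul_assoc]
    gcongr
    rw [← ENNReal.ofReal_ofNat 9, ← ENNReal.ofReal_mul (by norm_num), ← ENNReal.ofReal_ofNat 16]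
    exact ENNReal.ofReal_le_ofReal (by norm_num)
  set 𝒢 := {Q : DyadicCube d // Q ∈ stopFam ω w 𝒬 Q₀ ∧ Q.set ω ⊆ R.set ω}
  refine (ENNReal.mul_le_mul_iff_right (a := 9) (by norm_num) (by norm_num)).1 ?_
  calc 9 * ∑' Q : 𝒢, (∫⁻ x in Q.1.set ω, ENNReal.ofReal (w x))
      = ∑' Q : 𝒢, 9 * (∫⁻ x in Q.1.set ω, ENNReal.ofReal (w x)) := ENNReal.tsum_mul_left.symm
    _ ≤ ∑' Q : 𝒢, 16 * ENNReal.ofReal A * (∫⁻ x in stopUncovered ω w 𝒬 Q.1, ENNReal.ofReal (w x)) :=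
      ENNReal.tsum_le_tsum fun Q => nine_mul_setLIntegral_le_stopUncovered hd hwpos hwl hA2 Q.1
    _ ≤ 16 * ENNReal.ofReal A * (∫⁻ x in R.set ω, ENNReal.ofReal (w x)) := by
      rw [ENNReal.tsum_mul_left]; gcongr; exact tsum_setLIntegral_stopUncovered_le hd R
    _ ≤ 9 * (ENNReal.ofReal ((16 / 3) * A) * ∫⁻ x in R.set ω, ENNReal.ofReal (w x)) := by
      rw [← mul_assoc]; gcongr

/-- **weighted Carleson property of the stopping cubes, Lemma 5.3.** For an
`A₂` weight `w` and the stopping family `𝒢* = 𝒢*(Q₀)`, one has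
`Σ_{Q∈𝒢*, Q⊆R} w(Q) ≤ (16/3) [w]_{A₂} w(R)` for every `R ∈ 𝒟`. -/
theorem statement17 (d : ℕ) (hd : 0 < d) (ω : TransParam d)
    (w : (Fin d → ℝ) → ℝ) (A : ℝ) (hA : 0 ≤ A)
    (hwpos : ∀ᵐ x : Fin d → ℝ, 0 < w x) (hwl : LocallyIntegrable w volume)
    (hwl' : LocallyIntegrable (fun x => (w x)⁻¹) volume)
    (hA2 : A2BoundOn w A)
    (𝒬 : Set (DyadicCube d)) (Q₀ : DyadicCube d) (hQ₀ : Q₀ ∈ 𝒬) :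
    ∀ R : DyadicCube d,
      (∑' Q : {Q : DyadicCube d // Q ∈ stopFam ω w 𝒬 Q₀ ∧ Q.set ω ⊆ R.set ω},
        ∫⁻ x in (Q.1).set ω, ENNReal.ofReal (w x)) ≤
        ENNReal.ofReal ((16 / 3) * A) * ∫⁻ x in R.set ω, ENNReal.ofReal (w x) :=
  statement17_general d hd ω w A hwpos hwl hA2 𝒬 Q₀
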